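/- For positive integers k₁, k₂ and a nonnegative integer k₃ with at most one of k₁,k₂,k₃ equal to zero, and for every M ≥ 1, the truncated Mordell–Tornheim value satisfies ζ^{MT}_M(k₁, k₂; k₃) = Z_M((z_{k₁} ⧢ z_{k₂}) x^{k₃}), where Z_M(y x^{a₁-1} y x^{a₂-1} ⋯ y x^{a_u-1} x^c)-type words are evaluated by the rule Z_M(z_{(h₁,…,h_u)}) = Σ_{0<n₁<⋯<n_u<M} 1/(n₁^{h₁}⋯n_u^{h_u}) after rewriting (z_{k₁} ⧢ z_{k₂}) x^{k₃} as a ℚ-linear combination of monomials z_𝐡. -/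

import Mathlib

/-!
The partial fraction identity `1/(mn) = (1/m + 1/n)/(m+n)` gives
`ζ^{MT}_M(a+1, b+1; c) = ζ^{MT}_M(a, b+1; c+1) + ζ^{MT}_M(a+1, b; c+1)`, and
`ζ^{MT}_M(0, b; c) = ζ_M(b, c)`. Splitting off last letters, the shuffle obeys the same recursion,
`(u x) ⧢ (v x) = (u ⧢ v x) x + (u x ⧢ v) x`, and a trailing `x` in front of `x^c` just raises `c`.
So both sides satisfy the same recursion in `k₁ + k₂` with matching boundary values.
-/

/-- The shuffle product of two words, as a multiset of words. -/
def shuffle {α : Type*} : List α → List α → Multiset (List α)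
  | [], ys => {ys}
  | x :: xs, [] => {x :: xs}
  | x :: xs, y :: ys =>
      ((shuffle xs (y :: ys)).map (fun w => x :: w))
        + ((shuffle (x :: xs) ys).map (fun w => y :: w))
termination_by xs ys => xs.length + ys.length

/-- `zetaMrev M [k_r, …, k_1] = Σ_{0<n₁<⋯<n_r<M} 1/(n₁^{k₁}⋯n_r^{k_r})`. -/
def zetaMrev : ℕ → List ℕ → ℚ
  | _, [] => 1
  | M, k :: ks => ∑ n ∈ Finset.Ioo 0 M, zetaMrev n ks / (n : ℚ) ^ k

/-- The truncated MZV `ζ_M(k₁,…,k_r)`. -/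
def zetaM (M : ℕ) (ks : List ℕ) : ℚ := zetaMrev M ks.reverse

/-- Recover the index `(k₁,…,k_r)` from the word `z_{k₁}⋯z_{k_r}` over `{x,y}`
(`true = y`, `false = x`). -/
def toIndex (w : List Bool) : List ℕ :=
  w.foldl (fun acc b => if b then acc ++ [1] else acc.dropLast ++ [acc.getLastD 0 + 1]) []

/-- The word `z_{k₁}⋯z_{k_r}` (`true = y`, `false = x`). -/
def wordOf (ks : List ℕ) : List Bool :=
  ks.foldr (fun k acc => (true :: List.replicate (k - 1) false) ++ acc) []

/-- Truncated Mordell–Tornheim double zeta value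
`ζ^{MT}_M(a,b;c) = Σ_{m,n>0, m+n<M} 1/(m^a n^b (m+n)^c)`. -/
def zetaMT (M a b c : ℕ) : ℚ :=
  ∑ p ∈ ((Finset.Ioo 0 M) ×ˢ (Finset.Ioo 0 M)).filter (fun p => p.1 + p.2 < M),
    1 / ((p.1 : ℚ) ^ a * (p.2 : ℚ) ^ b * ((p.1 : ℚ) + (p.2 : ℚ)) ^ c)

theorem shuffle_nil_left {α : Type*} (ys : List α) : shuffle [] ys = {ys} := by
  rw [shuffle]

theorem shuffle_nil_right {α : Type*} (xs : List α) : shuffle xs [] = {xs} := by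
  cases xs <;> rw [shuffle]

theorem shuffle_cons_cons {α : Type*} (x y : α) (xs ys : List α) :
    shuffle (x :: xs) (y :: ys)
      = (shuffle xs (y :: ys)).map (x :: ·) + (shuffle (x :: xs) ys).map (y :: ·) := by
  rw [shuffle]

theorem shuffle_append_singleton {α : Type*} :
    ∀ (xs ys : List α) (x y : α), shuffle (xs ++ [x]) (ys ++ [y])
      = (shuffle xs (ys ++ [y])).map (· ++ [x]) + (shuffle (xs ++ [x]) ys).map (· ++ [y])
  | [], [], x, y => by
    simp only [List.nil_append, List.singleton_append, shuffle_cons_cons, shuffle_nil_left,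
      shuffle_nil_right, Multiset.map_singleton]
    exact add_comm _ _
  | [], b :: ys, x, y => by
    have ih := shuffle_append_singleton [] ys x y
    simp only [List.nil_append, shuffle_nil_left, Multiset.map_singleton] at ih
    simp only [List.nil_append, List.cons_append, shuffle_cons_cons, shuffle_nil_left, ih,
      Multiset.map_singleton, Multiset.map_add, Multiset.map_map, Function.comp_def]
    abel
  | a :: xs, [], x, y => by
    have ih := shuffle_append_singleton xs [] x y
    simp only [List.nil_append, shuffle_nil_right, Multiset.map_singleton] at ih
    simp only [List.nil_append, List.cons_append, shuffle_cons_cons, shuffle_nil_right, ih,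
      Multiset.map_singleton, Multiset.map_add, Multiset.map_map, Function.comp_def]
    abel
  | a :: xs, b :: ys, x, y => by
    have ih₁ := shuffle_append_singleton xs (b :: ys) x y
    have ih₂ := shuffle_append_singleton (a :: xs) ys x y
    simp only [List.cons_append] at ih₁ ih₂
    simp only [List.cons_append, shuffle_cons_cons, ih₁, ih₂, Multiset.map_add,
      Multiset.map_map, Function.comp_def]
    abel

theorem zetaMT_succ_succ (M a b c : ℕ) :
    zetaMT M (a + 1) (b + 1) c = zetaMT M a (b + 1) (c + 1) + zetaMT M (a + 1) b (c + 1) := by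
  unfold zetaMT
  rw [← Finset.sum_add_distrib]
  refine Finset.sum_congr rfl fun p hp => ?_
  simp only [Finset.mem_filter, Finset.mem_product, Finset.mem_Ioo] at hp
  have hm : (p.1 : ℚ) ≠ 0 := Nat.cast_ne_zero.mpr (by omega)
  have hn : (p.2 : ℚ) ≠ 0 := Nat.cast_ne_zero.mpr (by omega)
  have hs : (p.1 : ℚ) + p.2 ≠ 0 := by positivity
  field_simp
  ring

theorem zetaMT_comm (M a b c : ℕ) : zetaMT M a b c = zetaMT M b a c := by
  unfold zetaMT
  refine Finset.sum_nbij' Prod.swap Prod.swap ?_ ?_ (fun _ _ => rfl) (fun _ _ => rfl) ?_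
  · intro p hp
    simp only [Finset.mem_filter, Finset.mem_product, Finset.mem_Ioo,
      Prod.fst_swap, Prod.snd_swap] at hp ⊢
    omega
  · intro p hp
    simp only [Finset.mem_filter, Finset.mem_product, Finset.mem_Ioo,
      Prod.fst_swap, Prod.snd_swap] at hp ⊢
    omega
  · intro p _
    simp only [Prod.fst_swap, Prod.snd_swap]
    ring

theorem zetaM_pair (M k l : ℕ) :
    zetaM M [k, l] = ∑ s ∈ Finset.Ioo 0 M, (∑ n ∈ Finset.Ioo 0 s, 1 / (n : ℚ) ^ k) / (s : ℚ) ^ l := by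
  simp [zetaM, zetaMrev]

theorem zetaMT_zero_left (M k c : ℕ) : zetaMT M 0 k c = zetaM M [k, c] := by
  rw [zetaM_pair, zetaMT]
  simp only [Finset.sum_div]
  rw [Finset.sum_sigma']
  refine Finset.sum_nbij' (fun p => ⟨p.1 + p.2, p.2⟩) (fun q => (q.1 - q.2, q.2)) ?_ ?_ ?_ ?_ ?_
  · intro p hp
    simp only [Finset.mem_filter, Finset.mem_product, Finset.mem_Ioo,
      Finset.mem_sigma] at hp ⊢
    omega
  · intro q hq
    simp only [Finset.mem_filter, Finset.mem_product, Finset.mem_Ioo,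
      Finset.mem_sigma] at hq ⊢
    omega
  · rintro ⟨m, n⟩ hp
    simp only [Finset.mem_filter, Finset.mem_product, Finset.mem_Ioo] at hp
    simp only [Prod.mk.injEq, and_true]
    omega
  · rintro ⟨s, n⟩ hq
    simp only [Finset.mem_sigma, Finset.mem_Ioo] at hq
    simp only [Sigma.mk.inj_iff, heq_eq_eq, and_true]
    omega
  · intro p _
    push_cast
    rw [pow_zero, one_mul, div_div]

theorem wordOf_singleton (k : ℕ) : wordOf [k] = true :: List.replicate (k - 1) false := by
  simp [wordOf]

theorem toIndex_append_true_replicate (u : List Bool) (c : ℕ) :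
    toIndex (u ++ true :: List.replicate c false) = toIndex u ++ [c + 1] := by
  induction c with
  | zero => simp [toIndex, List.foldl_append]
  | succ c ih =>
    rw [List.replicate_succ', ← List.cons_append, ← List.append_assoc, toIndex,
      List.foldl_append, ← toIndex, ih]
    simp

theorem cons_replicate_succ {α : Type*} (x y : α) (n : ℕ) :
    x :: List.replicate (n + 1) y = (x :: List.replicate n y) ++ [y] := by
  rw [List.replicate_succ', List.cons_append]

/-- `Z_M(w x^c)`. -/
def zetaWord (M c : ℕ) (w : List Bool) : ℚ :=
  zetaM M (toIndex (w ++ List.replicate c false))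

theorem zetaWord_append_false (M c : ℕ) (w : List Bool) :
    zetaWord M c (w ++ [false]) = zetaWord M (c + 1) w := by
  simp [zetaWord, List.replicate_succ]

theorem sum_map_zetaWord_append_false (M c : ℕ) (s : Multiset (List Bool)) :
    ((s.map (· ++ [false])).map (zetaWord M c)).sum = (s.map (zetaWord M (c + 1))).sum := by
  simp only [Multiset.map_map, Function.comp_def, zetaWord_append_false]

theorem zetaWord_depth_two (M a c : ℕ) :
    zetaWord M c ((true :: List.replicate a false) ++ [true]) = zetaMT M 0 (a + 1) (c + 1) := by
  rw [zetaMT_zero_left, zetaWord, List.append_assoc, List.singleton_append,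
    toIndex_append_true_replicate, ← List.nil_append (true :: _), toIndex_append_true_replicate]
  rfl

theorem zetaMT_succ_succ_eq_sum_shuffle (M : ℕ) : ∀ a b c : ℕ,
    zetaMT M (a + 1) (b + 1) c
      = ((shuffle (true :: List.replicate a false) (true :: List.replicate b false)).map
          (zetaWord M c)).sum
  | 0, 0, c => by
    have h := shuffle_append_singleton [] [] true true
    have d := zetaWord_depth_two M 0 c
    simp only [List.nil_append, List.replicate_zero] at h d ⊢
    rw [h, shuffle_nil_left, shuffle_nil_right]
    simp only [Multiset.map_add, Multiset.map_singleton, Multiset.sum_add, Multiset.sum_singleton]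
    rw [d, zetaMT_succ_succ, zetaMT_comm M (0 + 1) 0]
  | 0, b + 1, c => by
    have h := shuffle_append_singleton [] (true :: List.replicate b false) true false
    have ih := zetaMT_succ_succ_eq_sum_shuffle M 0 b (c + 1)
    simp only [List.nil_append, List.replicate_zero] at h ih ⊢
    rw [cons_replicate_succ, h, shuffle_nil_left, Multiset.map_add, Multiset.sum_add,
      sum_map_zetaWord_append_false, ← ih, Multiset.map_singleton, Multiset.map_singleton,
      Multiset.sum_singleton, ← cons_replicate_succ, zetaWord_depth_two, zetaMT_succ_succ]
  | a + 1, 0, c => by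
    have h := shuffle_append_singleton (true :: List.replicate a false) [] false true
    have ih := zetaMT_succ_succ_eq_sum_shuffle M a 0 (c + 1)
    simp only [List.nil_append, List.replicate_zero] at h ih ⊢
    rw [cons_replicate_succ, h, shuffle_nil_right, Multiset.map_add, Multiset.sum_add,
      sum_map_zetaWord_append_false, ← ih, Multiset.map_singleton, Multiset.map_singleton,
      Multiset.sum_singleton, ← cons_replicate_succ, zetaWord_depth_two, zetaMT_succ_succ,
      zetaMT_comm M (a + 1 + 1) 0]
  | a + 1, b + 1, c => by
    have h₁ := zetaMT_succ_succ_eq_sum_shuffle M a (b + 1) (c + 1)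
    have h₂ := zetaMT_succ_succ_eq_sum_shuffle M (a + 1) b (c + 1)
    rw [cons_replicate_succ] at h₁ h₂
    rw [cons_replicate_succ, cons_replicate_succ, shuffle_append_singleton, Multiset.map_add,
      Multiset.sum_add, sum_map_zetaWord_append_false, sum_map_zetaWord_append_false, ← h₁, ← h₂,
      zetaMT_succ_succ]

theorem stmt_13_general (k1 k2 k3 M : ℕ) (h1 : 0 < k1) (h2 : 0 < k2) :
    zetaMT M k1 k2 k3
      = ((shuffle (wordOf [k1]) (wordOf [k2])).map
          (fun w => zetaM M (toIndex (w ++ List.replicate k3 false)))).sum := by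
  have h := zetaMT_succ_succ_eq_sum_shuffle M (k1 - 1) (k2 - 1) k3
  rwa [Nat.sub_add_cancel h1, Nat.sub_add_cancel h2, ← wordOf_singleton, ← wordOf_singleton] at h

/-- Kamano's formula: `ζ^{MT}_M(k₁,k₂;k₃) = Z_M((z_{k₁} ⧢ z_{k₂}) x^{k₃})`,
where each shuffled word, with `x^{k₃}` appended, is evaluated as the truncated
MZV of the corresponding index. -/
theorem stmt_13 (k1 k2 k3 M : ℕ) (h1 : 0 < k1) (h2 : 0 < k2) (hM : 1 ≤ M) :
    zetaMT M k1 k2 k3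
      = ((shuffle (wordOf [k1]) (wordOf [k2])).map
          (fun w => zetaM M (toIndex (w ++ List.replicate k3 false)))).sum :=
  stmt_13_general k1 k2 k3 M h1 h2
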